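/- arXiv:2408.12661 — 9 statements merged into one kernel-verified Lean document; each statement's English description precedes it below -/
import Mathlib

section
/- Let I = {0,1,...,ℓ} and g : I → {W,T,L} where the symbols are ordered W > T > L. Call a multiset of three such symbols 'consistent' if it is one of {W,W,L}, {W,T,L}, {W,L,L}, {T,T,T}. Suppose m is an integer with ℓ ≤ m ≤ 2ℓ and for all i,j,k ∈ I with i+j+k = m, the multiset {g(i),g(j),g(k)} is consistent. Then there exists κ ∈ ℝ such that for all i ∈ I, g(i) = sign(κ·(i − m/3)), where sign maps positive reals to W, zero to T, and negatives to L. -/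
def Consistent (x y z : ℤ) : Prop :=
  ({x, y, z} : Multiset ℤ) = {1, 1, -1} ∨
  ({x, y, z} : Multiset ℤ) = {1, 0, -1} ∨
  ({x, y, z} : Multiset ℤ) = {1, -1, -1} ∨
  ({x, y, z} : Multiset ℤ) = {0, 0, 0}

lemma ms_facts {x y z a b c : ℤ} (h : ({x, y, z} : Multiset ℤ) = {a, b, c}) :
    x + y + z = a + b + c ∧ (x = a ∨ x = b ∨ x = c) ∧ (y = a ∨ y = b ∨ y = c) ∧
      (z = a ∨ z = b ∨ z = c) ∧ (a = x ∨ a = y ∨ a = z) := by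
  refine ⟨?_, ?_, ?_, ?_, ?_⟩
  · have := congrArg Multiset.sum h
    simp at this
    linarith
  · have hx : x ∈ ({a, b, c} : Multiset ℤ) := h ▸ (by simp)
    simpa using hx
  · have hy : y ∈ ({a, b, c} : Multiset ℤ) := h ▸ (by simp)
    simpa using hy
  · have hz : z ∈ ({a, b, c} : Multiset ℤ) := h ▸ (by simp)
    simpa using hz
  · have ha : a ∈ ({x, y, z} : Multiset ℤ) := h.symm ▸ (by simp)
    simpa using ha

lemma cons_pair {x y : ℤ} (h : Consistent x y y) : x = -y := by
  rcases h with h | h | h | h <;> obtain ⟨h1, h2, h3, h4, h5⟩ := ms_facts h <;> omega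

lemma cons_self {x : ℤ} (h : Consistent x x x) : x = 0 := by
  rcases h with h | h | h | h <;> obtain ⟨h1, h2, h3, h4, h5⟩ := ms_facts h <;> omega

lemma cons_mid {x y : ℤ} (h : Consistent x 0 y) : x = -y := by
  rcases h with h | h | h | h <;> obtain ⟨h1, h2, h3, h4, h5⟩ := ms_facts h <;> omega

lemma sign_case {v : ℤ} (hv : v = 1 ∨ v = 0 ∨ v = -1) {x : ℝ} (hx : 0 < x) :
    (v : ℝ) = Real.sign ((v : ℝ) * x) := by
  rcases hv with h | h | h <;> subst h
  · rw [show ((1 : ℤ) : ℝ) * x = x by push_cast; ring, Real.sign_of_pos hx]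
    norm_num
  · simp
  · rw [show ((-1 : ℤ) : ℝ) * x = -x by push_cast; ring,
      Real.sign_of_neg (by linarith)]
    norm_num

theorem stmt0 (ℓ : ℕ) (g : ℕ → ℤ)
    (hrange : ∀ i ≤ ℓ, g i = 1 ∨ g i = 0 ∨ g i = -1)
    (m : ℕ) (hm1 : ℓ ≤ m) (hm2 : m ≤ 2 * ℓ)
    (hcons : ∀ i j k : ℕ, i ≤ ℓ → j ≤ ℓ → k ≤ ℓ → i + j + k = m →
      Consistent (g i) (g j) (g k)) :
    ∃ κ : ℝ, ∀ i ≤ ℓ, (g i : ℝ) = Real.sign (κ * ((i : ℝ) - (m : ℝ) / 3)) := by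
  have hcenter : ∀ i, i ≤ ℓ → 3 * i = m → g i = 0 := fun i hi h3 =>
    cons_self (hcons i i i hi hi hi (by omega))
  rcases Nat.eq_zero_or_pos ℓ with h0 | hL
  · subst h0
    refine ⟨0, ?_⟩
    intro i hi
    have hi0 : i = 0 := Nat.le_zero.mp hi
    subst hi0
    have hg0 : g 0 = 0 := hcenter 0 le_rfl (by omega)
    rw [hg0]
    simp
  · obtain ⟨il, ih', e, f, he1, he3, hf1, hf3, hile, hihe, hil, hih, hneg⟩ :
      ∃ il ih' e f : ℕ, 1 ≤ e ∧ e ≤ 3 ∧ 1 ≤ f ∧ f ≤ 3 ∧ 3 * il + e = m ∧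
        3 * ih' = m + f ∧ il ≤ ℓ ∧ ih' ≤ ℓ ∧ g ih' = - g il := by
      rcases (show m % 3 = 0 ∨ m % 3 = 1 ∨ m % 3 = 2 by omega) with hr | hr | hr
      · refine ⟨m / 3 - 1, m / 3 + 1, 3, 3, by norm_num, by norm_num, by norm_num,
          by norm_num, by omega, by omega, by omega, by omega, ?_⟩
        have ht0 : g (m / 3) = 0 := hcenter (m / 3) (by omega) (by omega)
        have hc := hcons (m / 3 - 1) (m / 3) (m / 3 + 1) (by omega) (by omega)
          (by omega) (by omega)
        rw [ht0] at hc
        have := cons_mid hc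
        omega
      · refine ⟨m / 3, m / 3 + 1, 1, 2, by norm_num, by norm_num, by norm_num,
          by norm_num, by omega, by omega, by omega, by omega, ?_⟩
        exact cons_pair (hcons (m / 3 + 1) (m / 3) (m / 3) (by omega) (by omega)
          (by omega) (by omega))
      · refine ⟨m / 3, m / 3 + 1, 2, 1, by norm_num, by norm_num, by norm_num,
          by norm_num, by omega, by omega, by omega, by omega, ?_⟩
        have := cons_pair (hcons (m / 3) (m / 3 + 1) (m / 3 + 1) (by omega) (by omega)
          (by omega) (by omega))
        omega
    have main : ∀ d : ℕ, ∀ i, i ≤ ℓ → 1 ≤ d →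
        (3 * i + d = m → g i = g il) ∧ (3 * i = m + d → g i = - g il) := by
      intro d
      induction d using Nat.strong_induction_on with
      | _ d IH =>
        intro i hi hd1
        constructor
        · intro hd
          rcases le_or_gt d 3 with hs | hs
          · have hii : i = il := by omega
            rw [hii]
          · set p := (m - i) / 2 with hpdef
            set q := m - i - p with hqdef
            obtain ⟨dp, hdp, hdp1, hdplt⟩ : ∃ dp, 3 * p = m + dp ∧ 1 ≤ dp ∧ dp < d :=
              ⟨3 * p - m, by omega, by omega, by omega⟩
            obtain ⟨dq, hdq, hdq1, hdqlt⟩ : ∃ dq, 3 * q = m + dq ∧ 1 ≤ dq ∧ dq < d :=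
              ⟨3 * q - m, by omega, by omega, by omega⟩
            have hgp := (IH dp hdplt p (by omega) hdp1).2 hdp
            have hgq := (IH dq hdqlt q (by omega) hdq1).2 hdq
            have hc := hcons i p q hi (by omega) (by omega) (by omega)
            rw [hgp, hgq] at hc
            have := cons_pair hc
            omega
        · intro hd
          rcases le_or_gt d 3 with hs | hs
          · have hii : i = ih' := by omega
            rw [hii, hneg]
          · set p := (m - i) / 2 with hpdef
            set q := m - i - p with hqdef
            obtain ⟨dp, hdp, hdp1, hdplt⟩ : ∃ dp, 3 * p + dp = m ∧ 1 ≤ dp ∧ dp < d :=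
              ⟨m - 3 * p, by omega, by omega, by omega⟩
            obtain ⟨dq, hdq, hdq1, hdqlt⟩ : ∃ dq, 3 * q + dq = m ∧ 1 ≤ dq ∧ dq < d :=
              ⟨m - 3 * q, by omega, by omega, by omega⟩
            have hgp := (IH dp hdplt p (by omega) hdp1).1 hdp
            have hgq := (IH dq hdqlt q (by omega) hdq1).1 hdq
            have hc := hcons i p q hi (by omega) (by omega) (by omega)
            rw [hgp, hgq] at hc
            have := cons_pair hc
            omega
    refine ⟨-((g il : ℤ) : ℝ), ?_⟩
    intro i hi
    have hcil := hrange il hil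
    rcases lt_trichotomy (3 * i) m with hlt | heq | hgt
    · have hv := (main (m - 3 * i) i hi (by omega)).1 (by omega)
      have hpos : 0 < (m : ℝ) / 3 - (i : ℝ) := by
        have h' : (3 * i + 1 : ℕ) ≤ m := hlt
        have h'' : (3 * (i : ℝ) + 1) ≤ (m : ℝ) := by exact_mod_cast h'
        linarith
      rw [hv, show -((g il : ℤ) : ℝ) * ((i : ℝ) - (m : ℝ) / 3)
        = ((g il : ℤ) : ℝ) * ((m : ℝ) / 3 - (i : ℝ)) by ring]
      exact sign_case hcil hpos
    · have hv := hcenter i hi heq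
      have hx0 : (i : ℝ) - (m : ℝ) / 3 = 0 := by
        have : ((3 * i : ℕ) : ℝ) = (m : ℝ) := by exact_mod_cast heq
        push_cast at this
        linarith
      rw [hv, hx0, mul_zero, Real.sign_zero]
      norm_num
    · have hv := (main (3 * i - m) i hi (by omega)).2 (by omega)
      have hpos : 0 < (i : ℝ) - (m : ℝ) / 3 := by
        have h' : (m + 1 : ℕ) ≤ 3 * i := hgt
        have h'' : ((m : ℝ) + 1) ≤ 3 * (i : ℝ) := by exact_mod_cast h'
        linarith
      have hsc := sign_case (v := - g il) (by omega) hpos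
      rw [hv]
      push_cast at hsc ⊢
      exact hsc
end

section
/- Let a, b > 0 with 2a ≥ b and 2b ≥ a, and let f : [−a, b] → {1, 0, −1} be Lebesgue measurable. Suppose that for all x₁, x₂, x₃ ∈ [−a, b] with x₁ + x₂ + x₃ = 0, the multiset {f(x₁), f(x₂), f(x₃)} is one of {1,1,−1}, {1,0,−1}, {1,−1,−1}, {0,0,0}. Then there exists κ ∈ ℝ such that f(x) = sgn(κx) for all x ∈ [−a, b]. -/
open Set Filter Topology MeasureTheory Metric
open scoped Pointwise

instance (x y z : ℤ) : Decidable (Consistent x y z) := by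
  unfold Consistent; infer_instance

namespace Consistent

variable {u v : ℤ}

theorem mem_signs {x y z w : ℤ} (h : Consistent x y z) (hw : w ∈ ({x, y, z} : Multiset ℤ)) :
    w ∈ ({1, 0, -1} : Finset ℤ) := by
  rcases h with h | h | h | h <;> rw [h] at hw <;> simp at hw <;> simp <;> omega

theorem eq_zero_of_all_eq (h : Consistent u u u) : u = 0 :=
  (by decide : ∀ u ∈ ({1, 0, -1} : Finset ℤ), Consistent u u u → u = 0) u
    (h.mem_signs (by simp)) h

theorem eq_neg_of_third_eq_zero (h : Consistent u v 0) : v = -u :=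
  (by decide : ∀ u ∈ ({1, 0, -1} : Finset ℤ), ∀ v ∈ ({1, 0, -1} : Finset ℤ),
    Consistent u v 0 → v = -u) u (h.mem_signs (by simp)) v (h.mem_signs (by simp)) h

theorem eq_neg_of_last_two_eq (h : Consistent u v v) : u = -v :=
  (by decide : ∀ u ∈ ({1, 0, -1} : Finset ℤ), ∀ v ∈ ({1, 0, -1} : Finset ℤ),
    Consistent u v v → u = -v) u (h.mem_signs (by simp)) v (h.mem_signs (by simp)) h

theorem eq_neg_of_first_two_eq (h : Consistent u u v) : v = -u :=
  (by decide : ∀ u ∈ ({1, 0, -1} : Finset ℤ), ∀ v ∈ ({1, 0, -1} : Finset ℤ),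
    Consistent u u v → v = -u) u (h.mem_signs (by simp)) v (h.mem_signs (by simp)) h

end Consistent

/- Around a density point `v`, `A` fills more than `3/4` of a small ball `B`; for `t` near `2v`,
`A ∩ B` and `t - (A ∩ B)` are then too large to be disjoint inside the ball of radius `3r/2`. -/
theorem exists_add_self_mem_nhds_of_volume_ne_zero {A : Set ℝ} (hA : MeasurableSet A)
    (hA0 : volume A ≠ 0) : ∃ c, A + A ∈ 𝓝 c := by
  have : (ae (volume.restrict A)).NeBot := ae_neBot.2 (by rwa [Ne, Measure.restrict_eq_zero])
  obtain ⟨v, hv⟩ := (Besicovitch.ae_tendsto_measure_inter_div volume A).exists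
  obtain ⟨r, hdense, hr : 0 < r⟩ := ((hv.eventually (lt_mem_nhds (ENNReal.ofReal_lt_one.2
    (by norm_num : (3 / 4 : ℝ) < 1)))).and self_mem_nhdsWithin).exists
  set P := A ∩ closedBall v r
  have hPm : MeasurableSet P := hA.inter measurableSet_closedBall
  have hP : ENNReal.ofReal (3 / 4 * (2 * r)) < volume P := by
    rwa [Real.volume_closedBall, ENNReal.lt_div_iff_mul_lt (by simp [hr]) (by simp),
      ← ENNReal.ofReal_mul (by norm_num)] at hdense
  refine ⟨2 * v, mem_of_superset (ball_mem_nhds _ (half_pos hr)) fun t ht => ?_⟩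
  set Q := (t - ·) ⁻¹' P
  have hQ : volume Q = volume P :=
    (Measure.measurePreserving_sub_left volume t).measure_preimage hPm.nullMeasurableSet
  have hsub : ∀ {x}, x ∈ P ∪ Q → x ∈ closedBall v (3 / 2 * r) := by
    rw [mem_ball, Real.dist_eq, abs_lt] at ht
    rintro x (⟨-, hx⟩ | ⟨-, hx⟩) <;>
      simp only [mem_closedBall, Real.dist_eq, abs_le] at hx ⊢ <;> constructor <;> linarith
  obtain ⟨x, hxP, hxQ⟩ := nonempty_inter_of_measure_lt_add volume (measurable_const_sub t hPm)
    (fun x hx => hsub (Or.inl hx)) (fun x hx => hsub (Or.inr hx)) (by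
      rw [hQ, Real.volume_closedBall,
        show 2 * (3 / 2 * r) = 3 / 4 * (2 * r) + 3 / 4 * (2 * r) by ring,
        ENNReal.ofReal_add (by positivity) (by positivity)]
      exact ENNReal.add_lt_add hP hP)
  exact ⟨x, hxP.1, t - x, hxQ.1, add_sub_cancel x t⟩

section HalvingAdditive

variable {S : Set ℝ} {m : ℝ}

theorem div_two_pow_mem (half : ∀ x ∈ S, x / 2 ∈ S) {x : ℝ} (hx : x ∈ S) (n : ℕ) :
    x / 2 ^ n ∈ S := by
  induction n with
  | zero => simpa using hx
  | succ n ih => simpa [pow_succ, div_div] using half _ ih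

theorem succ_mul_mem (add : ∀ x ∈ S, ∀ y ∈ S, x + y ≤ m → x + y ∈ S) {s : ℝ} (hs : s ∈ S)
    (hs0 : 0 < s) (k : ℕ) (hk : (k + 1) * s ≤ m) : (k + 1) * s ∈ S := by
  induction k with
  | zero => simpa using hs
  | succ k ih =>
    push_cast at hk ⊢
    simpa [add_mul] using add _ (ih (by nlinarith)) s hs (by linarith)

theorem Ioc_subset_of_Ioo_subset (half : ∀ x ∈ S, x / 2 ∈ S)
    (add : ∀ x ∈ S, ∀ y ∈ S, x + y ≤ m → x + y ∈ S) {α β : ℝ} (hα : 0 < α) (hαβ : α < β)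
    (hI : Ioo α β ⊆ S) : Ioc 0 m ⊆ S := by
  rintro x ⟨hx, hxm⟩
  have hβ : 0 < β := hα.trans hαβ
  -- write `x = (k + 1) * s` with `2 ^ n * s ∈ Ioo α β`: for large `n` the interval
  -- `(2 ^ n * x / β, 2 ^ n * x / α)` of admissible `k + 1` has length greater than `1`
  obtain ⟨n, hn⟩ : ∃ n : ℕ, α * β / (x * (β - α)) < 2 ^ n := pow_unbounded_of_one_lt _ one_lt_two
  rw [div_lt_iff₀ (by nlinarith)] at hn
  set k := ⌊2 ^ n * x / β⌋₊
  have hk₁ : 2 ^ n * x / β < k + 1 := Nat.lt_floor_add_one _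
  have hk₂ : (k : ℝ) ≤ 2 ^ n * x / β := Nat.floor_le (by positivity [hβ, hx])
  rw [le_div_iff₀ hβ] at hk₂
  rw [div_lt_iff₀ hβ] at hk₁
  have hs : x / (k + 1) ∈ S := by
    have := div_two_pow_mem half (hI ⟨?_, ?_⟩) n (x := 2 ^ n * x / (k + 1))
    · simpa [mul_div_assoc] using this
    · rw [lt_div_iff₀ (by positivity)]; nlinarith
    · rw [div_lt_iff₀ (by positivity)]; linarith
  have hx' : (k + 1) * (x / (k + 1)) = x := mul_div_cancel₀ _ (by positivity)
  simpa only [hx'] using succ_mul_mem add hs (by positivity) k (hx'.symm ▸ hxm)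

theorem Ioc_subset_of_volume_ne_zero (hS : MeasurableSet S) (hS0 : volume S ≠ 0)
    (hSm : S ⊆ Ioc 0 m) (half : ∀ x ∈ S, x / 2 ∈ S)
    (add : ∀ x ∈ S, ∀ y ∈ S, x + y ≤ m → x + y ∈ S) : Ioc 0 m ⊆ S := by
  set A := S ∩ Iic (m / 2)
  have hA0 : volume A ≠ 0 := by
    have hsub : (2 * ·) ⁻¹' S ⊆ A := fun x (hx : 2 * x ∈ S) =>
      ⟨by simpa using half _ hx, show x ≤ m / 2 by linarith [(hSm hx).2]⟩
    intro h0
    have := measure_mono_null hsub h0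
    rw [Real.volume_preimage_mul_left two_ne_zero] at this
    simp [hS0] at this
  obtain ⟨c, hc⟩ := exists_add_self_mem_nhds_of_volume_ne_zero (hS.inter measurableSet_Iic) hA0
  have hAA : A + A ⊆ S := by
    rintro _ ⟨x, hx, y, hy, rfl⟩
    exact add x hx.1 y hy.1 (by linarith [hx.2.out, hy.2.out])
  obtain ⟨l, u, ⟨hlc, hcu⟩, hlu⟩ := mem_nhds_iff_exists_Ioo_subset.1 (mem_of_superset hc hAA)
  exact Ioc_subset_of_Ioo_subset half add (hSm (hAA (mem_of_mem_nhds hc))).1 hcu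
    ((Ioo_subset_Ioo_left hlc.le).trans hlu)

end HalvingAdditive

def ConsistentOn (f : ℝ → ℤ) (s : Set ℝ) : Prop :=
  ∀ x₁ ∈ s, ∀ x₂ ∈ s, ∀ x₃ ∈ s, x₁ + x₂ + x₃ = 0 → Consistent (f x₁) (f x₂) (f x₃)

namespace ConsistentOn

variable {f : ℝ → ℤ} {s t : Set ℝ} {x y : ℝ}

theorem mono (h : ConsistentOn f t) (hst : s ⊆ t) : ConsistentOn f s :=
  fun x₁ h₁ x₂ h₂ x₃ h₃ => h x₁ (hst h₁) x₂ (hst h₂) x₃ (hst h₃)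

theorem map_zero (h : ConsistentOn f s) (h0 : 0 ∈ s) : f 0 = 0 :=
  (h 0 h0 0 h0 0 h0 (by norm_num)).eq_zero_of_all_eq

theorem mem_signs (h : ConsistentOn f s) (h0 : 0 ∈ s) (hx : x ∈ s) (hnx : -x ∈ s) :
    f x ∈ ({1, 0, -1} : Finset ℤ) :=
  (h x hx (-x) hnx 0 h0 (by ring)).mem_signs (by simp)

theorem map_neg (h : ConsistentOn f s) (h0 : 0 ∈ s) (hx : x ∈ s) (hnx : -x ∈ s) :
    f (-x) = -f x := by
  have := h x hx (-x) hnx 0 h0 (by ring)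
  rw [h.map_zero h0] at this
  exact this.eq_neg_of_third_eq_zero

theorem map_half (h : ConsistentOn f s) (h0 : 0 ∈ s) (hx : x ∈ s) (hx2 : x / 2 ∈ s)
    (hnx2 : -(x / 2) ∈ s) : f (x / 2) = f x := by
  have := h x hx (-(x / 2)) hnx2 (-(x / 2)) hnx2 (by ring)
  rw [h.map_neg h0 hx2 hnx2] at this
  rw [this.eq_neg_of_last_two_eq, neg_neg]

theorem map_add_of_eq (h : ConsistentOn f s) (h0 : 0 ∈ s) (hx : x ∈ s) (hy : y ∈ s)
    (hxy : x + y ∈ s) (hnxy : -(x + y) ∈ s) (hfxy : f x = f y) : f (x + y) = f x := by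
  have := h x hx y hy (-(x + y)) hnxy (by ring)
  rw [h.map_neg h0 hxy hnxy, ← hfxy] at this
  exact neg_inj.1 this.eq_neg_of_first_two_eq

theorem exists_eq_on_Ioc {m : ℝ} (h : ConsistentOn f (Icc (-m) m)) (hm : 0 < m)
    (hs : Ioc 0 m ⊆ s) (hmeas : ∀ σ : ℤ, MeasurableSet {x ∈ s | f x = σ}) :
    ∃ σ : ℤ, ∀ x ∈ Ioc 0 m, f x = σ := by
  have h0 : (0 : ℝ) ∈ Icc (-m) m := ⟨by linarith, hm.le⟩
  have hIcc : ∀ {x}, x ∈ Ioc 0 m → x ∈ Icc (-m) m ∧ -x ∈ Icc (-m) m := fun hx =>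
    ⟨⟨by linarith [hx.1], hx.2⟩, ⟨by linarith [hx.2], by linarith [hx.1]⟩⟩
  set S : ℤ → Set ℝ := fun σ => Ioc 0 m ∩ {x ∈ s | f x = σ}
  obtain ⟨σ, hσ⟩ : ∃ σ : ℤ, volume (S σ) ≠ 0 := by
    by_contra! hnull
    have hcover : Ioc 0 m ⊆ ⋃ σ, S σ := fun x hx => mem_iUnion.2 ⟨f x, hx, hs hx, rfl⟩
    have := measure_mono_null hcover (measure_iUnion_null hnull)
    simp [hm.not_ge] at this
  refine ⟨σ, fun x hx => (Ioc_subset_of_volume_ne_zero (measurableSet_Ioc.inter (hmeas σ)) hσ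
    inter_subset_left ?_ ?_ hx).2.2⟩
  · rintro x ⟨hx, -, hfx⟩
    have hx2 : x / 2 ∈ Ioc 0 m := ⟨by linarith [hx.1], by linarith [hx.1, hx.2]⟩
    exact ⟨hx2, hs hx2, (h.map_half h0 (hIcc hx).1 (hIcc hx2).1 (hIcc hx2).2).trans hfx⟩
  · rintro x ⟨hx, -, hfx⟩ y ⟨hy, -, hfy⟩ hxy
    have hxy' : x + y ∈ Ioc 0 m := ⟨by linarith [hx.1, hy.1], hxy⟩
    exact ⟨hxy', hs hxy', (h.map_add_of_eq h0 (hIcc hx).1 (hIcc hy).1 (hIcc hxy').1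
      (hIcc hxy').2 (hfx.trans hfy.symm)).trans hfx⟩

theorem eq_sign_mul {a b : ℝ} {σ : ℤ} (h : ConsistentOn f (Icc (-a) b)) (ha : 0 < a)
    (hb : 0 < b) (hab : b ≤ 2 * a) (hba : a ≤ 2 * b) (hσ : ∀ x ∈ Ioc 0 (min a b), f x = σ)
    (hx : x ∈ Icc (-a) b) : (f x : ℝ) = Real.sign (σ * x) := by
  have hmem : ∀ {y}, |y| ≤ min a b → y ∈ Icc (-a) b := fun {y} hy =>
    ⟨by linarith [neg_abs_le y, min_le_left a b], by linarith [le_abs_self y, min_le_right a b]⟩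
  have hmin : 0 < min a b := lt_min ha hb
  have h0 : (0 : ℝ) ∈ Icc (-a) b := hmem (by simpa using hmin.le)
  have hx2 : |x / 2| ≤ min a b := by
    rw [abs_le, neg_le]
    constructor <;> apply le_min <;> linarith [hx.1, hx.2]
  have hx2' : |-(x / 2)| ≤ min a b := by rwa [abs_neg]
  have hσ' : σ ∈ ({1, 0, -1} : Finset ℤ) := hσ _ ⟨hmin, le_rfl⟩ ▸
    h.mem_signs h0 (hmem (by rw [abs_of_pos hmin])) (hmem (by rw [abs_neg, abs_of_pos hmin]))
  simp only [Finset.mem_insert, Finset.mem_singleton] at hσ'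
  rw [← h.map_half h0 hx (hmem hx2) (hmem hx2')]
  rcases lt_trichotomy x 0 with hx0 | rfl | hx0
  · rw [← neg_neg (x / 2), h.map_neg h0 (hmem hx2') (by simpa using hmem hx2),
      hσ _ ⟨by linarith, by linarith [abs_le.1 hx2']⟩]
    rcases hσ' with rfl | rfl | rfl <;> simp [Real.sign_of_neg hx0, Real.sign_neg]
  · simp [h.map_zero h0]
  · rw [hσ _ ⟨by linarith, (le_abs_self _).trans hx2⟩]
    rcases hσ' with rfl | rfl | rfl <;> simp [Real.sign_of_pos hx0, Real.sign_neg]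

end ConsistentOn

theorem stmt1_general (a b : ℝ) (ha : 0 < a) (hb : 0 < b)
    (hab : b ≤ 2 * a) (hba : a ≤ 2 * b)
    (f : ℝ → ℤ)
    (hmeas : ∀ v : ℤ, MeasurableSet {x ∈ Set.Icc (-a) b | f x = v})
    (hcons : ∀ x₁ ∈ Set.Icc (-a) b, ∀ x₂ ∈ Set.Icc (-a) b, ∀ x₃ ∈ Set.Icc (-a) b,
      x₁ + x₂ + x₃ = 0 → Consistent (f x₁) (f x₂) (f x₃)) :
    ∃ κ : ℝ, ∀ x ∈ Set.Icc (-a) b, (f x : ℝ) = Real.sign (κ * x) := by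
  have hsub : Icc (-min a b) (min a b) ⊆ Icc (-a) b :=
    Icc_subset_Icc (neg_le_neg (min_le_left a b)) (min_le_right a b)
  obtain ⟨σ, hσ⟩ := ConsistentOn.exists_eq_on_Ioc (ConsistentOn.mono hcons hsub) (lt_min ha hb)
    ((Ioc_subset_Icc_self.trans (Icc_subset_Icc_left (by simp [ha.le, hb.le]))).trans hsub) hmeas
  exact ⟨σ, fun x hx => ConsistentOn.eq_sign_mul hcons ha hb hab hba hσ hx⟩

theorem stmt1 (a b : ℝ) (ha : 0 < a) (hb : 0 < b)
    (hab : b ≤ 2 * a) (hba : a ≤ 2 * b)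
    (f : ℝ → ℤ)
    (hrange : ∀ x ∈ Set.Icc (-a) b, f x = 1 ∨ f x = 0 ∨ f x = -1)
    (hmeas : ∀ v : ℤ, MeasurableSet {x ∈ Set.Icc (-a) b | f x = v})
    (hcons : ∀ x₁ ∈ Set.Icc (-a) b, ∀ x₂ ∈ Set.Icc (-a) b, ∀ x₃ ∈ Set.Icc (-a) b,
      x₁ + x₂ + x₃ = 0 → Consistent (f x₁) (f x₂) (f x₃)) :
    ∃ κ : ℝ, ∀ x ∈ Set.Icc (-a) b, (f x : ℝ) = Real.sign (κ * x) :=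
  stmt1_general a b ha hb hab hba f hmeas hcons
end

section
/- Assuming the axiom of choice, there exists a set M ⊆ ℝ \ {0} such that: (1) 1 ∈ M and −√2 ∈ M; (2) M is closed under multiplication by positive rationals; (3) M is closed under addition; and (4) M ∪ (−M) = ℝ \ {0} (where −M = {−m : m ∈ M}). In particular 0 ∉ M. -/
/-!
Take a `ℚ`-linear map `f : ℝ → ℝ` with `f 1 = 1` and `f √2 = -1`, which exists because `1` and `√2`
are `ℚ`-linearly independent (a Hamel basis extending them is where choice enters). Then
`M = {x | 0 < f x ∨ (f x = 0 ∧ 0 < x)}`, the positive cone of the lexicographic order on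
`x ↦ (f x, x)`, is an additive cone splitting `ℝ \ {0}` into `M` and `-M`, and it contains `1`
and `-√2` because `f 1 > 0` and `f (-√2) > 0`.
-/

theorem LinearIndependent.exists_linearMap_apply_eq {K V W ι : Type*} [DivisionRing K]
    [AddCommGroup V] [Module K V] [AddCommGroup W] [Module K W] {v : ι → V}
    (hv : LinearIndependent K v) (w : ι → W) : ∃ f : V →ₗ[K] W, ∀ i, f (v i) = w i := by
  obtain ⟨f, hf⟩ := LinearMap.exists_extend (Finsupp.linearCombination K w ∘ₗ hv.repr)
  refine ⟨f, fun i => ?_⟩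
  have := LinearMap.congr_fun hf ⟨v i, Submodule.subset_span (Set.mem_range_self i)⟩
  simpa [hv.repr_eq_single i ⟨v i, _⟩ rfl] using this

theorem linearIndependent_one_sqrt_two : LinearIndependent ℚ ![(1 : ℝ), √2] := by
  rw [LinearIndependent.pair_iff]
  intro s t hst
  simp only [Rat.smul_def, mul_one] at hst
  obtain rfl : t = 0 := by
    by_contra ht
    refine irrational_sqrt_two ⟨-s / t, ?_⟩
    have ht' : (t : ℝ) ≠ 0 := by exact_mod_cast ht
    push_cast
    field_simp
    linarith
  simpa using hst

def lexPosCone {V W : Type*} [Zero V] [LT V] [Zero W] [LT W] (f : V → W) : Set V :=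
  {x | 0 < f x ∨ f x = 0 ∧ 0 < x}

section

variable {V W : Type*} [AddZeroClass V] [Preorder V] [AddZeroClass W] [Preorder W] (f : V →+ W)

theorem zero_notMem_lexPosCone : (0 : V) ∉ lexPosCone f := by
  simp [lexPosCone]

theorem ne_zero_of_mem_lexPosCone {x : V} (hx : x ∈ lexPosCone f) : x ≠ 0 := by
  rintro rfl
  exact zero_notMem_lexPosCone f hx

end

section

variable {V W : Type*} [AddCommGroup V] [LinearOrder V] [IsOrderedAddMonoid V]
  [AddCommGroup W] [LinearOrder W] [IsOrderedAddMonoid W] (f : V →+ W)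

theorem add_mem_lexPosCone {x y : V} (hx : x ∈ lexPosCone f) (hy : y ∈ lexPosCone f) :
    x + y ∈ lexPosCone f := by
  simp only [lexPosCone, Set.mem_ofPred_eq, map_add] at hx hy ⊢
  rcases hx with hx | ⟨hx, hx'⟩ <;> rcases hy with hy | ⟨hy, hy'⟩
  · exact .inl (add_pos hx hy)
  · exact .inl (by simpa [hy] using hx)
  · exact .inl (by simpa [hx] using hy)
  · exact .inr ⟨by simp [hx, hy], add_pos hx' hy'⟩

theorem lexPosCone_union_neg : lexPosCone f ∪ -lexPosCone f = {x | x ≠ 0} := by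
  ext x
  simp only [lexPosCone, Set.mem_union, Set.mem_neg, Set.mem_ofPred_eq, map_neg,
    neg_eq_zero, Left.neg_pos_iff]
  constructor
  · rintro ((h | ⟨-, h⟩) | (h | ⟨-, h⟩)) rfl <;> simp at h
  · intro hx
    rcases lt_trichotomy (f x) 0 with h | h | h
    · exact .inr (.inl h)
    · rcases hx.lt_or_gt with h' | h'
      · exact .inr (.inr ⟨h, h'⟩)
      · exact .inl (.inr ⟨h, h'⟩)
    · exact .inl (.inl h)

end

theorem ratCast_mul_mem_lexPosCone {K L : Type*} [Field K] [LinearOrder K] [IsStrictOrderedRing K]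
    [Field L] [LinearOrder L] [IsStrictOrderedRing L] (f : K →+ L) {x : K}
    (hx : x ∈ lexPosCone f) {q : ℚ} (hq : 0 < q) : (q : K) * x ∈ lexPosCone f := by
  have hf : f ((q : K) * x) = (q : L) * f x := by
    simpa only [smul_eq_mul] using map_ratCast_smul f K L q x
  rcases hx with hx | ⟨hx, hx'⟩
  · exact .inl (hf ▸ mul_pos (Rat.cast_pos.mpr hq) hx)
  · exact .inr ⟨by rw [hf, hx, mul_zero], mul_pos (Rat.cast_pos.mpr hq) hx'⟩

theorem stmt4 :
    ∃ M : Set ℝ,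
      (0 : ℝ) ∉ M ∧
      (∀ x ∈ M, x ≠ 0) ∧
      (1 : ℝ) ∈ M ∧
      -Real.sqrt 2 ∈ M ∧
      (∀ t ∈ M, ∀ q : ℚ, 0 < q → (q : ℝ) * t ∈ M) ∧
      (∀ s ∈ M, ∀ t ∈ M, s + t ∈ M) ∧
      M ∪ (-M) = {x : ℝ | x ≠ 0} := by
  obtain ⟨f, hf⟩ := linearIndependent_one_sqrt_two.exists_linearMap_apply_eq ![(1 : ℝ), -1]
  let g : ℝ →+ ℝ := f.toAddMonoidHom
  have hg1 : g 1 = 1 := hf 0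
  have hg2 : g √2 = -1 := hf 1
  refine ⟨lexPosCone g, zero_notMem_lexPosCone g, fun x => ne_zero_of_mem_lexPosCone g,
    .inl (by rw [hg1]; exact one_pos), .inl (by rw [map_neg, hg2, neg_neg]; exact one_pos),
    fun t ht q hq => ratCast_mul_mem_lexPosCone g ht hq,
    fun s hs t ht => add_mem_lexPosCone g hs ht, lexPosCone_union_neg g⟩
end

section
/- Let M ⊆ ℝ \ {0} contain 1 and −√2, be closed under addition and under multiplication by positive rationals, be maximal (under inclusion) among such sets, and suppose s ∈ ℝ \ {0} with s ∉ M and −s ∉ M. Then M' = M ∪ ⋃_{q ∈ ℚ, q>0} (qs + (M ∪ {0})) is a strictly larger subset of ℝ \ {0} containing 1 and −√2, closed under addition and positive rational dilations — a contradiction; hence any maximal such M satisfies M ∪ (−M) = ℝ \ {0}. -/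
/-- The conditions from the paper: a subset of ℝ \ {0} containing 1 and -√2,
closed under addition and positive rational dilations. -/
def GoodSet (M : Set ℝ) : Prop :=
  (∀ x ∈ M, x ≠ 0) ∧
  (1 : ℝ) ∈ M ∧
  -Real.sqrt 2 ∈ M ∧
  (∀ t ∈ M, ∀ q : ℚ, 0 < q → (q : ℝ) * t ∈ M) ∧
  (∀ s ∈ M, ∀ t ∈ M, s + t ∈ M)

theorem stmt6 (M : Set ℝ) (hM : GoodSet M)
    (hmax : ∀ M' : Set ℝ, GoodSet M' → M ⊆ M' → M' = M) :
    (∀ s : ℝ, s ≠ 0 → s ∉ M → -s ∉ M →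
      GoodSet (M ∪ ⋃ q ∈ {q : ℚ | 0 < q}, (fun m => (q : ℝ) * s + m) '' (M ∪ {0})) ∧
      M ⊂ M ∪ ⋃ q ∈ {q : ℚ | 0 < q}, (fun m => (q : ℝ) * s + m) '' (M ∪ {0})) ∧
    M ∪ (-M) = {x : ℝ | x ≠ 0} := by
  obtain ⟨hne, h1, h2, hq, hadd⟩ := hM
  have key : ∀ s : ℝ, s ≠ 0 → s ∉ M → -s ∉ M →
      GoodSet (M ∪ ⋃ q ∈ {q : ℚ | 0 < q}, (fun m => (q : ℝ) * s + m) '' (M ∪ {0})) ∧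
      M ⊂ M ∪ ⋃ q ∈ {q : ℚ | 0 < q}, (fun m => (q : ℝ) * s + m) '' (M ∪ {0}) := by
    intro s hs hsM hsM'
    set M' : Set ℝ :=
      M ∪ ⋃ q ∈ {q : ℚ | 0 < q}, (fun m => (q : ℝ) * s + m) '' (M ∪ {0}) with hM'def
    have mem_iff : ∀ x : ℝ, x ∈ M' ↔
        x ∈ M ∨ ∃ q : ℚ, 0 < q ∧ ∃ m : ℝ, (m ∈ M ∨ m = 0) ∧ (q : ℝ) * s + m = x := by
      intro x
      simp only [hM'def, Set.mem_union, Set.mem_iUnion, Set.mem_image, Set.mem_setOf_eq,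
        Set.mem_singleton_iff, exists_prop]
    have hgood : GoodSet M' := by
      refine ⟨?_, Or.inl h1, Or.inl h2, ?_, ?_⟩
      · -- nonzero
        intro x hx
        rcases (mem_iff x).1 hx with hx | ⟨q, hq0, m, hm, rfl⟩
        · exact hne x hx
        · rcases hm with hm | rfl
          · intro h0
            apply hsM'
            have : ((q⁻¹ : ℚ) : ℝ) * m ∈ M := hq m hm q⁻¹ (by positivity)
            have hqne : (q : ℝ) ≠ 0 := by exact_mod_cast hq0.ne'
            have hmeq : m = -((q : ℝ) * s) := by linarith
            have : ((q⁻¹ : ℚ) : ℝ) * m = -s := by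
              rw [hmeq]; push_cast; field_simp
            rwa [this] at ‹((q⁻¹ : ℚ) : ℝ) * m ∈ M›
          · have hqne : (q : ℝ) ≠ 0 := by exact_mod_cast hq0.ne'
            simpa using mul_ne_zero hqne hs
      · -- dilation
        intro t ht r hr
        rcases (mem_iff t).1 ht with ht | ⟨q, hq0, m, hm, rfl⟩
        · exact (mem_iff _).2 (Or.inl (hq t ht r hr))
        · refine (mem_iff _).2 (Or.inr ⟨r * q, mul_pos hr hq0, (r : ℝ) * m, ?_, ?_⟩)
          · rcases hm with hm | rfl
            · exact Or.inl (hq m hm r hr)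
            · right; simp
          · push_cast; ring
      · -- addition
        intro x hx y hy
        rcases (mem_iff x).1 hx with hx | ⟨q, hq0, m, hm, rfl⟩ <;>
          rcases (mem_iff y).1 hy with hy | ⟨q', hq0', m', hm', rfl⟩
        · exact (mem_iff _).2 (Or.inl (hadd x hx y hy))
        · refine (mem_iff _).2 (Or.inr ⟨q', hq0', x + m', ?_, by ring⟩)
          rcases hm' with hm' | rfl
          · exact Or.inl (hadd x hx m' hm')
          · simpa using Or.inl hx
        · refine (mem_iff _).2 (Or.inr ⟨q, hq0, m + y, ?_, by ring⟩)
          rcases hm with hm | rfl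
          · exact Or.inl (hadd m hm y hy)
          · simpa using Or.inl hy
        · refine (mem_iff _).2 (Or.inr ⟨q + q', add_pos hq0 hq0', m + m', ?_, by push_cast; ring⟩)
          rcases hm with hm | rfl <;> rcases hm' with hm' | rfl
          · exact Or.inl (hadd m hm m' hm')
          · simpa using Or.inl hm
          · simpa using Or.inl hm'
          · simp
    refine ⟨hgood, ?_⟩
    constructor
    · exact Set.subset_union_left
    · intro hsub
      apply hsM
      apply hsub
      refine (mem_iff s).2 (Or.inr ⟨1, one_pos, 0, Or.inr rfl, by simp⟩)
  refine ⟨key, ?_⟩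
  ext x
  simp only [Set.mem_union, Set.mem_neg, Set.mem_setOf_eq]
  constructor
  · rintro (hx | hx)
    · exact hne x hx
    · intro h0
      subst h0
      exact hne 0 (by simpa using hx) rfl
  · intro hx
    by_contra hc
    push_neg at hc
    obtain ⟨hxM, hxN⟩ := hc
    obtain ⟨hg, hsub⟩ := key x hx hxM hxN
    exact hsub.ne (hmax _ hg hsub.subset).symm
end

section
/- Let M ⊆ ℝ \ {0} satisfy: 0 ∉ M, M is closed under addition, M is closed under positive rational dilations, and M ∪ (−M) = ℝ \ {0}. Define g : [0,1] → {1,0,−1} by g(1/3) = 0, g(x) = −1 if x − 1/3 ∈ M, and g(x) = 1 otherwise. Then for all ε₁, ε₂, ε₃ ≥ 0 with ε₁ + ε₂ + ε₃ = 1, the multiset {g(ε₁), g(ε₂), g(ε₃)} is consistent, i.e. equal to one of {1,1,−1}, {1,0,−1}, {1,−1,−1}, {0,0,0}. -/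
theorem stmt7 (M : Set ℝ)
    (h0 : (0 : ℝ) ∉ M)
    (hne : ∀ x ∈ M, x ≠ 0)
    (hadd : ∀ s ∈ M, ∀ t ∈ M, s + t ∈ M)
    (hq : ∀ t ∈ M, ∀ q : ℚ, 0 < q → (q : ℝ) * t ∈ M)
    (hcover : M ∪ (-M) = {x : ℝ | x ≠ 0})
    (g : ℝ → ℤ)
    (hg13 : g (1/3) = 0)
    (hgL : ∀ x : ℝ, x ≠ 1/3 → x - 1/3 ∈ M → g x = -1)
    (hgW : ∀ x : ℝ, x ≠ 1/3 → x - 1/3 ∉ M → g x = 1) :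
    ∀ ε₁ ε₂ ε₃ : ℝ, 0 ≤ ε₁ → 0 ≤ ε₂ → 0 ≤ ε₃ → ε₁ + ε₂ + ε₃ = 1 →
      Consistent (g ε₁) (g ε₂) (g ε₃) := by
  intro a b c _ _ _ hsum
  -- key: if x ≠ 0 and x ∉ M then -x ∈ M
  have key : ∀ x : ℝ, x ≠ 0 → x ∉ M → -x ∈ M := by
    intro x hx hxm
    have : x ∈ M ∪ (-M) := by rw [hcover]; exact hx
    rcases this with h | h
    · exact absurd h hxm
    · exact h
  by_cases ha : a = 1/3 <;> by_cases hb : b = 1/3 <;> by_cases hc : c = 1/3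
  · rw [ha, hb, hc, hg13]; right; right; right; rfl
  · exfalso; apply hc; linarith
  · exfalso; apply hb; linarith
  · -- a = 1/3, b, c ≠ 1/3, with (b-1/3) + (c-1/3) = 0
    rw [ha, hg13]
    have hbc : c - 1/3 = -(b - 1/3) := by linarith
    by_cases mb : b - 1/3 ∈ M
    · by_cases mc : c - 1/3 ∈ M
      · exfalso
        have := hadd _ mb _ mc
        have hz : (b - 1/3) + (c - 1/3) = 0 := by linarith
        rw [hz] at this; exact h0 this
      · rw [hgL b hb mb, hgW c hc mc]; right; left; decide
    · have hbne : b - 1/3 ≠ 0 := sub_ne_zero.mpr hb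
      have mc : c - 1/3 ∈ M := by rw [hbc]; exact key _ hbne mb
      rw [hgW b hb mb, hgL c hc mc]; right; left; decide
  · exfalso; apply ha; linarith
  · rw [hb, hg13]
    by_cases ma : a - 1/3 ∈ M
    · by_cases mc : c - 1/3 ∈ M
      · exfalso
        have := hadd _ ma _ mc
        have hz : (a - 1/3) + (c - 1/3) = 0 := by linarith
        rw [hz] at this; exact h0 this
      · rw [hgL a ha ma, hgW c hc mc]; right; left; decide
    · have hane : a - 1/3 ≠ 0 := sub_ne_zero.mpr ha
      have mc : c - 1/3 ∈ M := by
        have : c - 1/3 = -(a - 1/3) := by linarith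
        rw [this]; exact key _ hane ma
      rw [hgW a ha ma, hgL c hc mc]; right; left; decide
  · rw [hc, hg13]
    by_cases ma : a - 1/3 ∈ M
    · by_cases mb : b - 1/3 ∈ M
      · exfalso
        have := hadd _ ma _ mb
        have hz : (a - 1/3) + (b - 1/3) = 0 := by linarith
        rw [hz] at this; exact h0 this
      · rw [hgL a ha ma, hgW b hb mb]; right; left; decide
    · have hane : a - 1/3 ≠ 0 := sub_ne_zero.mpr ha
      have mb : b - 1/3 ∈ M := by
        have : b - 1/3 = -(a - 1/3) := by linarith
        rw [this]; exact key _ hane ma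
      rw [hgW a ha ma, hgL b hb mb]; right; left; decide
  · -- none equal 1/3
    have hane : a - 1/3 ≠ 0 := sub_ne_zero.mpr ha
    have hbne : b - 1/3 ≠ 0 := sub_ne_zero.mpr hb
    have hcne : c - 1/3 ≠ 0 := sub_ne_zero.mpr hc
    by_cases ma : a - 1/3 ∈ M <;> by_cases mb : b - 1/3 ∈ M <;>
      by_cases mc : c - 1/3 ∈ M
    · exfalso
      have := hadd _ (hadd _ ma _ mb) _ mc
      have hz : ((a - 1/3) + (b - 1/3)) + (c - 1/3) = 0 := by linarith
      rw [hz] at this; exact h0 this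
    · rw [hgL a ha ma, hgL b hb mb, hgW c hc mc]; right; right; left; decide
    · rw [hgL a ha ma, hgW b hb mb, hgL c hc mc]; right; right; left; decide
    · rw [hgL a ha ma, hgW b hb mb, hgW c hc mc]; left; decide
    · rw [hgW a ha ma, hgL b hb mb, hgL c hc mc]; right; right; left; decide
    · rw [hgW a ha ma, hgL b hb mb, hgW c hc mc]; left; decide
    · rw [hgW a ha ma, hgW b hb mb, hgL c hc mc]; left; decide
    · exfalso
      have := hadd _ (hadd _ (key _ hane ma) _ (key _ hbne mb)) _ (key _ hcne mc)
      have hz : (-(a - 1/3) + -(b - 1/3)) + -(c - 1/3) = 0 := by linarith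
      rw [hz] at this; exact h0 this
end

section
/- Let I = {0,1,...,n} and g : I → {1,0,−1} be such that for all i,j,k ∈ I with i+j+k = n the multiset {g(i),g(j),g(k)} is consistent, and additionally g is non-increasing and g(n) = −1. Then for all i ∈ I, g(i) = sgn(n − 3i), that is, g(i) = 1 if 3i < n, g(i) = 0 if 3i = n, and g(i) = −1 if 3i > n. -/
lemma key15 (n : ℕ) (g : ℕ → ℤ)
    (hrange : ∀ i ≤ n, g i = 1 ∨ g i = 0 ∨ g i = -1)
    (hcons : ∀ i j k : ℕ, i ≤ n → j ≤ n → k ≤ n → i + j + k = n →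
      Consistent (g i) (g j) (g k))
    (hmono : ∀ i j : ℕ, i ≤ j → j ≤ n → g j ≤ g i)
    (hg0 : g 0 = 1) :
    ∀ k m, m ≤ n → g m = 0 → (if 3*m ≤ n then n + 3*m else 3*(n-m)) ≤ k → 3*m = n := by
  intro k
  induction k with
  | zero =>
    intro m hm hgm hmeas
    split at hmeas
    · omega
    · -- 3*(n-m) ≤ 0 and 3*m > n, so m = n
      have hmn : m = n := by omega
      rw [hmn] at hgm
      have hc := hcons n 0 0 le_rfl (Nat.zero_le n) (Nat.zero_le n) (by omega)
      rw [hg0, hgm] at hc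
      exact absurd hc (by unfold Consistent; decide)
  | succ k ih =>
    intro m hm hgm hmeas
    by_contra hne
    rcases lt_trichotomy (3*m) n with hlt | heq | hgt
    · -- 3m < n : m' = n - 2m, g m' = 0, 3m' > n
      rw [if_pos (by omega : 3*m ≤ n)] at hmeas
      set m' := n - 2*m with hm'
      have hm'n : m' ≤ n := by omega
      have hc := hcons m m m' hm hm hm'n (by omega)
      rw [hgm] at hc
      have hgm' : g m' = 0 := by
        rcases hrange m' hm'n with h | h | h
        · rw [h] at hc; exact absurd hc (by unfold Consistent; decide)
        · exact h
        · rw [h] at hc; exact absurd hc (by unfold Consistent; decide)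
      have := ih m' hm'n hgm' (by
        have : ¬ 3*m' ≤ n := by omega
        simp only [this, if_false]; omega)
      omega
    · exact hne heq
    · rcases le_or_gt (2*m) n with h2 | h2
      · -- 2m ≤ n < 3m : m' = n - 2m, g m' = 0, 3m' < n
        rw [if_neg (by omega : ¬ 3*m ≤ n)] at hmeas
        set m' := n - 2*m with hm'
        have hm'n : m' ≤ n := by omega
        have hc := hcons m m m' hm hm hm'n (by omega)
        rw [hgm] at hc
        have hgm' : g m' = 0 := by
          rcases hrange m' hm'n with h | h | h
          · rw [h] at hc; exact absurd hc (by unfold Consistent; decide)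
          · exact h
          · rw [h] at hc; exact absurd hc (by unfold Consistent; decide)
        have := ih m' hm'n hgm' (by
          have : 3*m' ≤ n := by omega
          simp only [this, if_true]; omega)
        omega
      · -- 2m > n : triple (m, n-m, 0)
        have hnm : n - m ≤ n := by omega
        have hc := hcons m (n - m) 0 hm hnm (Nat.zero_le n) (by omega)
        rw [hgm, hg0] at hc
        rcases hrange (n - m) hnm with h | h | h
        · rw [h] at hc; exact absurd hc (by unfold Consistent; decide)
        · rw [h] at hc; exact absurd hc (by unfold Consistent; decide)
        · have := hmono (n - m) m (by omega) hm
          rw [hgm, h] at this; omega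

theorem stmt15 (n : ℕ) (g : ℕ → ℤ)
    (hrange : ∀ i ≤ n, g i = 1 ∨ g i = 0 ∨ g i = -1)
    (hcons : ∀ i j k : ℕ, i ≤ n → j ≤ n → k ≤ n → i + j + k = n →
      Consistent (g i) (g j) (g k))
    (hmono : ∀ i j : ℕ, i ≤ j → j ≤ n → g j ≤ g i)
    (hn : g n = -1) :
    ∀ i ≤ n, (3 * i < n → g i = 1) ∧ (3 * i = n → g i = 0) ∧ (n < 3 * i → g i = -1) := by
  have hg0 : g 0 = 1 := by
    rcases hrange 0 (Nat.zero_le n) with h | h | h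
    · exact h
    all_goals {
      have hc := hcons 0 0 n (Nat.zero_le n) (Nat.zero_le n) le_rfl (by omega)
      rw [h, hn] at hc
      exact absurd hc (by unfold Consistent; decide) }
  have key := key15 n g hrange hcons hmono hg0
  intro i hi
  refine ⟨?_, ?_, ?_⟩
  · -- 3i < n → g i = 1
    intro hlt
    rcases hrange i hi with h | h | h
    · exact h
    · have := key (n + 3*i) i hi h (by rw [if_pos (by omega : 3*i ≤ n)])
      omega
    · -- g i = -1 with 3i < n: triple (i, q, r) with q,r ≥ i
      set q := (n - i) / 2 with hq
      set r := n - i - q with hr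
      have hqi : i ≤ q := by omega
      have hri : i ≤ r := by omega
      have hqn : q ≤ n := by omega
      have hrn : r ≤ n := by omega
      have hgq : g q = -1 := by
        have h1 := hmono i q hqi hqn
        rw [h] at h1
        rcases hrange q hqn with h' | h' | h' <;> omega
      have hgr : g r = -1 := by
        have h1 := hmono i r hri hrn
        rw [h] at h1
        rcases hrange r hrn with h' | h' | h' <;> omega
      have hc := hcons i q r hi hqn hrn (by omega)
      rw [h, hgq, hgr] at hc
      exact absurd hc (by unfold Consistent; decide)
  · -- 3i = n → g i = 0
    intro heq
    have hc := hcons i i i hi hi hi (by omega)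
    rcases hrange i hi with h | h | h
    · rw [h] at hc; exact absurd hc (by unfold Consistent; decide)
    · exact h
    · rw [h] at hc; exact absurd hc (by unfold Consistent; decide)
  · -- n < 3i → g i = -1
    intro hgt
    rcases hrange i hi with h | h | h
    · -- g i = 1 : triple (i, q, r) with q,r ≤ i
      set q := (n - i) / 2 with hq
      set r := n - i - q with hr
      have hqi : q ≤ i := by omega
      have hri : r ≤ i := by omega
      have hgq : g q = 1 := by
        have h1 := hmono q i hqi hi
        rw [h] at h1
        rcases hrange q (by omega) with h' | h' | h' <;> omega
      have hgr : g r = 1 := by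
        have h1 := hmono r i hri hi
        rw [h] at h1
        rcases hrange r (by omega) with h' | h' | h' <;> omega
      have hc := hcons i q r hi (by omega) (by omega) (by omega)
      rw [h, hgq, hgr] at hc
      exact absurd hc (by unfold Consistent; decide)
    · have := key (3*(n - i)) i hi h (by rw [if_neg (by omega : ¬ 3*i ≤ n)])
      omega
    · exact h
end

section
/- Let g : [0,1] → {1,0,−1} be non-increasing (with the order 1 > 0 > −1 on the codomain) and suppose that for all x,y,z ∈ [0,1] with x+y+z = 1 the multiset {g(x),g(y),g(z)} is consistent. Then either g is identically 0, or g(x) = 1 for x < 1/3, g(1/3) = 0, and g(x) = −1 for x > 1/3. -/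
theorem stmt16 (g : ℝ → ℤ)
    (hrange : ∀ x ∈ Set.Icc (0:ℝ) 1, g x = 1 ∨ g x = 0 ∨ g x = -1)
    (hmono : ∀ x ∈ Set.Icc (0:ℝ) 1, ∀ y ∈ Set.Icc (0:ℝ) 1, x ≤ y → g y ≤ g x)
    (hcons : ∀ x ∈ Set.Icc (0:ℝ) 1, ∀ y ∈ Set.Icc (0:ℝ) 1, ∀ z ∈ Set.Icc (0:ℝ) 1,
      x + y + z = 1 → Consistent (g x) (g y) (g z)) :
    (∀ x ∈ Set.Icc (0:ℝ) 1, g x = 0) ∨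
    (∀ x ∈ Set.Icc (0:ℝ) 1,
      (x < 1/3 → g x = 1) ∧ (x = 1/3 → g x = 0) ∧ (1/3 < x → g x = -1)) := by
  have mem3 : (1/3 : ℝ) ∈ Set.Icc (0:ℝ) 1 := by norm_num
  have mem0 : (0 : ℝ) ∈ Set.Icc (0:ℝ) 1 := by norm_num
  have g13 : g (1/3) = 0 := by
    have h := hcons (1/3) mem3 (1/3) mem3 (1/3) mem3 (by norm_num)
    rcases hrange (1/3) mem3 with h0 | h0 | h0 <;> rw [h0] at h ⊢ <;>
      first | rfl | (exfalso; revert h; unfold Consistent; decide)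
  have HA : ∀ x ∈ Set.Icc (0:ℝ) 1, ∀ m ∈ Set.Icc (0:ℝ) 1, g m = 0 → x + m + m = 1 → g x = 0 := by
    intro x hx m hm hgm hsum
    have h := hcons x hx m hm m hm hsum
    rw [hgm] at h
    rcases hrange x hx with h0 | h0 | h0 <;> rw [h0] at h ⊢ <;>
      first | rfl | (exfalso; revert h; unfold Consistent; decide)
  have HB : ∀ x ∈ Set.Icc (0:ℝ) 1, g x = 0 → ∀ m ∈ Set.Icc (0:ℝ) 1, x + m + m = 1 → g m = 0 := by
    intro x hx hgx m hm hsum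
    have h := hcons x hx m hm m hm hsum
    rw [hgx] at h
    rcases hrange m hm with h0 | h0 | h0 <;> rw [h0] at h ⊢ <;>
      first | rfl | (exfalso; revert h; unfold Consistent; decide)
  have key : ∀ n : ℕ, ∀ x : ℝ, 0 ≤ x → x ≤ 1/3 → g x = 0 →
      3 * 4^n * x ≤ 4^n - 1 → g 0 = 0 := by
    intro n
    induction n with
    | zero =>
      intro x h0 h3 hg hb
      norm_num at hb
      have hx0 : x = 0 := by linarith
      rw [← hx0]; exact hg
    | succ n ih =>
      intro x h0 h3 hg hb
      have hx1 : x ∈ Set.Icc (0:ℝ) 1 := ⟨h0, by linarith⟩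
      have hy : (1 - 2*x) ∈ Set.Icc (0:ℝ) 1 := ⟨by linarith, by linarith⟩
      have hgy : g (1 - 2*x) = 0 := HA (1-2*x) hy x hx1 hg (by ring)
      have hx'0 : (0:ℝ) ≤ max 0 (4*x - 1) := le_max_left _ _
      have hx'3 : max 0 (4*x - 1) ≤ 1/3 := max_le (by norm_num) (by linarith)
      have hx'm : max 0 (4*x - 1) ≤ 1 - 2*x := max_le (by linarith) (by linarith)
      have hx'g : 4*x - 1 ≤ max 0 (4*x - 1) := le_max_right _ _
      have hmmem : (1 - max 0 (4*x - 1))/2 ∈ Set.Icc (0:ℝ) 1 := ⟨by linarith, by linarith⟩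
      have hm1 : x ≤ (1 - max 0 (4*x - 1))/2 := by linarith
      have hm2 : (1 - max 0 (4*x - 1))/2 ≤ 1 - 2*x := by linarith
      have hgm : g ((1 - max 0 (4*x - 1))/2) = 0 := by
        have a1 := hmono x hx1 ((1 - max 0 (4*x - 1))/2) hmmem hm1
        have a2 := hmono ((1 - max 0 (4*x - 1))/2) hmmem (1-2*x) hy hm2
        rw [hg] at a1; rw [hgy] at a2; omega
      have hgx' : g (max 0 (4*x - 1)) = 0 :=
        HA (max 0 (4*x - 1)) ⟨hx'0, by linarith⟩ ((1 - max 0 (4*x - 1))/2) hmmem hgm (by ring)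
      apply ih (max 0 (4*x - 1)) hx'0 hx'3 hgx'
      have h4 : (1:ℝ) ≤ 4^n := one_le_pow₀ (by norm_num)
      rcases max_cases (0:ℝ) (4*x - 1) with ⟨he, _⟩ | ⟨he, _⟩ <;> rw [he]
      · linarith
      · rw [pow_succ] at hb; nlinarith
  have prop : ∀ x : ℝ, 0 ≤ x → x < 1/3 → g x = 0 → g 0 = 0 := by
    intro x h0 h3 hg
    have hc : (0:ℝ) < 1 - 3*x := by linarith
    obtain ⟨n, hn⟩ := pow_unbounded_of_one_lt (1/(1-3*x)) (by norm_num : (1:ℝ) < 4)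
    have h1 : 1 < 4^n * (1 - 3*x) := (div_lt_iff₀ hc).mp hn
    exact key n x h0 (le_of_lt h3) hg (by nlinarith)
  have g0ge : 0 ≤ g 0 := by
    have := hmono 0 mem0 (1/3) mem3 (by norm_num)
    omega
  rcases hrange 0 mem0 with h0 | h0 | h0
  · -- g 0 = 1 : second alternative
    right
    rintro x ⟨hx0, hx1⟩
    have hxm : x ∈ Set.Icc (0:ℝ) 1 := ⟨hx0, hx1⟩
    refine ⟨?_, ?_, ?_⟩
    · intro hlt
      rcases hrange x hxm with h | h | h
      · exact h
      · exact absurd (prop x hx0 hlt h) (by omega)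
      · have := hmono x hxm (1/3) mem3 (le_of_lt hlt); omega
    · intro he; rw [he]; exact g13
    · intro hlt
      rcases hrange x hxm with h | h | h
      · have := hmono (1/3) mem3 x hxm (le_of_lt hlt); omega
      · exfalso
        have hm : (1-x)/2 ∈ Set.Icc (0:ℝ) 1 := ⟨by linarith, by linarith⟩
        have hgm := HB x hxm h ((1-x)/2) hm (by ring)
        exact absurd (prop ((1-x)/2) (by linarith) (by linarith) hgm) (by omega)
      · exact h
  · -- g 0 = 0 : first alternative
    left
    rintro x ⟨hx0, hx1⟩
    have hxm : x ∈ Set.Icc (0:ℝ) 1 := ⟨hx0, hx1⟩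
    by_cases hx3 : x ≤ 1/3
    · have a1 := hmono 0 mem0 x hxm hx0
      have a2 := hmono x hxm (1/3) mem3 hx3
      omega
    · push_neg at hx3
      have hm : (1-x)/2 ∈ Set.Icc (0:ℝ) 1 := ⟨by linarith, by linarith⟩
      have hgm : g ((1-x)/2) = 0 := by
        have a1 := hmono 0 mem0 ((1-x)/2) hm (by linarith)
        have a2 := hmono ((1-x)/2) hm (1/3) mem3 (by linarith)
        omega
      exact HA x hxm ((1-x)/2) hm hgm (by ring)
  · omega
end

section
/- Let g : [0,1] → {1,0,−1} be Lebesgue measurable and suppose that for all x,y,z ∈ [0,1] with x+y+z = 1 the multiset {g(x),g(y),g(z)} is consistent. Then there exists κ ∈ ℝ such that g(x) = sgn(κ(x − 1/3)) for all x ∈ [0,1]. -/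
/-!
Put `h t = g (t + 1/3)`, so that the hypothesis concerns triples in `[-1/3, 2/3]` summing to `0`.
The triples `(0,0,0)`, `(t,-t,0)` and `(t,-t/2,-t/2)` show that `h 0 = 0`, that `h` is odd on
`[-1/3, 1/3]` and that `h (t/2) = h t`; the triple `(x, y, -(x+y))` shows that `{h = 1}` is closed
under addition there. If `h` took both values `1` and `-1` on `(0, 1/3]`, a reflection argument
would give both level sets positive measure near `0`, so by Steinhaus' theorem the differences of
their points, at which `h = 1`, would fill an interval; halving and adding spreads the value of `h`
on that interval over all of `(0, 1/3]`, a contradiction. If `h z = 0` and `h s = 1` with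
`0 < s < z` (small such `s` exist by halving), the triple `(s, -z, z - s)` gives `h (z - s) = -1`.
Hence `h` is constant on `(0, 1/3]`, and then `h t = sgn (h (1/3) * t)`.
-/

open MeasureTheory Set Filter Topology Metric
open scoped Pointwise

theorem consistent_iff {a b c : ℤ} :
    Consistent a b c ↔ (a = 1 ∨ a = 0 ∨ a = -1) ∧ (b = 1 ∨ b = 0 ∨ b = -1) ∧
      (c = 1 ∨ c = 0 ∨ c = -1) ∧ (a = 1 ∨ b = 1 ∨ c = 1 ↔ a = -1 ∨ b = -1 ∨ c = -1) := by
  constructor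
  · intro h
    have hmem : ∀ x ∈ ({a, b, c} : Multiset ℤ), x = 1 ∨ x = 0 ∨ x = -1 := by
      rcases h with h | h | h | h <;> rw [h] <;> simp
    rcases hmem a (by simp) with rfl | rfl | rfl <;>
      rcases hmem b (by simp) with rfl | rfl | rfl <;>
      rcases hmem c (by simp) with rfl | rfl | rfl <;> revert h <;> unfold Consistent <;> decide
  · rintro ⟨rfl | rfl | rfl, rfl | rfl | rfl, rfl | rfl | rfl, h⟩ <;> revert h <;>
      unfold Consistent <;> decide

theorem volume_ne_zero_of_Ioo_subset_union_preimage_sub {C : Set ℝ} {s : ℝ} (hs : 0 < s)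
    (hC : Ioo 0 s ⊆ C ∪ (fun u => s - u) ⁻¹' C) : volume C ≠ 0 := by
  intro h0
  have hrefl : volume ((fun u => s - u) ⁻¹' C) = 0 :=
    (Measure.measurePreserving_sub_left volume s).quasiMeasurePreserving.preimage_null h0
  have := (measure_mono (μ := volume) hC).trans (measure_union_le _ _)
  rw [h0, hrefl, add_zero, Real.volume_Ioo, nonpos_iff_eq_zero, ENNReal.ofReal_eq_zero] at this
  linarith

theorem Besicovitch.exists_mem_tendsto_measure_inter_div {β : Type*} [MetricSpace β]
    [MeasurableSpace β] [BorelSpace β] [SecondCountableTopology β] [HasBesicovitchCovering β]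
    (μ : Measure β) [IsLocallyFiniteMeasure μ] {s : Set β} (hs : MeasurableSet s) (h's : μ s ≠ 0) :
    ∃ x ∈ s, Tendsto (fun r => μ (s ∩ closedBall x r) / μ (closedBall x r)) (𝓝[>] 0) (𝓝 1) := by
  have := ae_restrict_neBot.2 h's
  obtain ⟨x, hx, hxs⟩ := ((ae_tendsto_measure_inter_div μ s).and (ae_restrict_mem hs)).exists
  exact ⟨x, hxs, hx⟩

/-- Steinhaus' theorem for two sets (compare `sub_mem_nhds_zero_of_addHaar_pos`). -/
theorem Real.exists_sub_mem_nhds {A B : Set ℝ} (hA : MeasurableSet A) (hB : MeasurableSet B)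
    (hA0 : volume A ≠ 0) (hB0 : volume B ≠ 0) : ∃ x, A - B ∈ 𝓝 x := by
  have hdensity : ∀ {S : Set ℝ} {a : ℝ},
      Tendsto (fun r => volume (S ∩ closedBall a r) / volume (closedBall a r)) (𝓝[>] 0) (𝓝 1) →
      ∀ᶠ r in 𝓝[>] 0, 0 < r ∧ ENNReal.ofReal (3 / 2 * r) < volume (S ∩ closedBall a r) := by
    intro S a hS
    have h34 : ENNReal.ofReal (3 / 4) < 1 := by rw [ENNReal.ofReal_lt_one]; norm_num
    filter_upwards [hS.eventually (eventually_gt_nhds h34), self_mem_nhdsWithin] with r hr hr0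
    rw [Real.volume_closedBall, ENNReal.lt_div_iff_mul_lt (Or.inl (by simpa using hr0))
      (Or.inl ENNReal.ofReal_ne_top), ← ENNReal.ofReal_mul (by norm_num)] at hr
    exact ⟨hr0, by convert hr using 2; ring⟩
  obtain ⟨a, haA, ha⟩ := Besicovitch.exists_mem_tendsto_measure_inter_div volume hA hA0
  obtain ⟨b, hbB, hb⟩ := Besicovitch.exists_mem_tendsto_measure_inter_div volume hB hB0
  obtain ⟨r, ⟨hr0, hrA⟩, -, hrB⟩ := ((hdensity ha).and (hdensity hb)).exists
  refine ⟨a - b, Metric.mem_nhds_iff.2 ⟨r / 4, by positivity, fun u hu => ?_⟩⟩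
  rw [mem_ball, Real.dist_eq] at hu
  -- `A ∩ closedBall a r` and the translate by `u` of `B ∩ closedBall b r` both lie in
  -- `closedBall a (5 / 4 * r)`, whose measure is less than the sum of theirs.
  have hsubA : A ∩ closedBall a r ⊆ closedBall a (5 / 4 * r) := fun x hx =>
    closedBall_subset_closedBall (by linarith) hx.2
  have hsubB : (· + -u) ⁻¹' (B ∩ closedBall b r) ⊆ closedBall a (5 / 4 * r) := by
    rintro x ⟨-, hx⟩
    rw [mem_closedBall, Real.dist_eq] at hx ⊢
    calc |x - a| = |(x + -u - b) + (u - (a - b))| := by ring_nf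
      _ ≤ |x + -u - b| + |u - (a - b)| := abs_add_le _ _
      _ ≤ 5 / 4 * r := by linarith
  have hvol : volume (closedBall a (5 / 4 * r)) <
      volume (A ∩ closedBall a r) + volume ((· + -u) ⁻¹' (B ∩ closedBall b r)) := by
    rw [measure_preimage_add_right, Real.volume_closedBall]
    refine lt_of_le_of_lt ?_ (ENNReal.add_lt_add hrA hrB)
    rw [← ENNReal.ofReal_add (by positivity) (by positivity)]
    exact ENNReal.ofReal_le_ofReal (by linarith)
  obtain ⟨x, ⟨hxA, -⟩, hxB, -⟩ :=
    nonempty_inter_of_measure_lt_add' volume (hA.inter measurableSet_closedBall) hsubA hsubB hvol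
  exact Set.mem_sub.2 ⟨x, hxA, x + -u, hxB, by ring⟩

theorem Ioc_subset_of_half_mem_of_add_mem {S : Set ℝ} {c α β : ℝ}
    (hhalf : ∀ x ∈ S, x / 2 ∈ S) (hadd : ∀ x ∈ S, ∀ y ∈ S, x + y ≤ c → x + y ∈ S)
    (hα : 0 < α) (hαβ : α < β) (hI : Ioo α β ⊆ S) : Ioc 0 c ⊆ S := by
  have hscaled : ∀ k : ℕ, ∀ t, α < 2 ^ k * t → 2 ^ k * t < β → t ∈ S := by
    intro k
    induction k with
    | zero => intro t h₁ h₂; exact hI ⟨by simpa using h₁, by simpa using h₂⟩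
    | succ k ih =>
      intro t h₁ h₂
      have h2t := ih (2 * t) (by rw [← mul_assoc, ← pow_succ]; exact h₁)
        (by rw [← mul_assoc, ← pow_succ]; exact h₂)
      simpa using hhalf _ h2t
  have hmul : ∀ t ∈ S, 0 < t → ∀ n : ℕ, (n + 1) * t ≤ c → (n + 1) * t ∈ S := by
    intro t ht ht0 n
    induction n with
    | zero => intro _; simpa using ht
    | succ n ih =>
      intro hn
      push_cast at hn ⊢
      rw [add_mul, one_mul]
      exact hadd _ (ih (by nlinarith)) _ ht (by linarith)
  rintro x ⟨hx0, hxc⟩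
  -- Choose `k` so large that `(2 ^ k * x / β, 2 ^ k * x / α)` has length `> 1`, hence contains
  -- an integer `n + 1`; then `t = x / (n + 1)` satisfies `2 ^ k * t ∈ (α, β)`.
  obtain ⟨k, hk⟩ := pow_unbounded_of_one_lt (α * β / (x * (β - α))) (by norm_num : (1:ℝ) < 2)
  have hβ0 : 0 < β := hα.trans hαβ
  have hk0 : (0 : ℝ) < 2 ^ k := by positivity
  set n := ⌊2 ^ k * x / β⌋₊
  have hn₁ : 2 ^ k * x / β < n + 1 := Nat.lt_floor_add_one _
  have hn₂ : (n : ℝ) ≤ 2 ^ k * x / β := Nat.floor_le (by positivity)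
  have hn0 : (0 : ℝ) < n + 1 := by positivity
  have hxn : ((n : ℝ) + 1) * (x / (n + 1)) = x := by field_simp
  have := hmul (x / (n + 1)) ?_ (by positivity) n (by rw [hxn]; exact hxc)
  · rwa [hxn] at this
  apply hscaled k
  · rw [mul_div_assoc', lt_div_iff₀ hn0]
    have hk' : α * β < 2 ^ k * (x * (β - α)) := by
      rwa [div_lt_iff₀ (by nlinarith)] at hk
    have : α * n ≤ α * (2 ^ k * x / β) := by gcongr
    rw [mul_div_assoc', le_div_iff₀ hβ0] at this
    nlinarith
  · rw [mul_div_assoc', div_lt_iff₀ hn0]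
    rw [div_lt_iff₀ hβ0] at hn₁
    linarith

def ZeroSumConsistent (h : ℝ → ℤ) : Prop :=
  ∀ u ∈ Icc (-1/3 : ℝ) (2/3), ∀ v ∈ Icc (-1/3 : ℝ) (2/3), ∀ w ∈ Icc (-1/3 : ℝ) (2/3),
    u + v + w = 0 → Consistent (h u) (h v) (h w)

namespace ZeroSumConsistent

variable {h : ℝ → ℤ} (hh : ZeroSumConsistent h)
include hh

theorem neg : ZeroSumConsistent (fun t => -h t) := fun u hu v hv w hw huvw => by
  have := consistent_iff.1 (hh u hu v hv w hw huvw)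
  exact consistent_iff.2 (by dsimp only; omega)

/-- For a zero-sum triple, the upper bound `2/3` follows from the lower bounds. -/
theorem consistent {u v w : ℝ} (hu : -1/3 ≤ u) (hv : -1/3 ≤ v) (hw : -1/3 ≤ w)
    (huvw : u + v + w = 0) : Consistent (h u) (h v) (h w) :=
  hh u ⟨hu, by linarith⟩ v ⟨hv, by linarith⟩ w ⟨hw, by linarith⟩ huvw

theorem apply_mem {t : ℝ} (ht₁ : -1/3 ≤ t) (ht₂ : t ≤ 2/3) : h t = 1 ∨ h t = 0 ∨ h t = -1 :=
  (consistent_iff.1 (hh.consistent (v := -(t / 2)) (w := -(t / 2)) ht₁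
    (by linarith) (by linarith) (by ring))).1

theorem apply_zero : h 0 = 0 := by
  have := consistent_iff.1 (hh.consistent (u := 0) (v := 0) (w := 0)
    (by norm_num) (by norm_num) (by norm_num) (by norm_num))
  omega

theorem apply_neg {t : ℝ} (ht₁ : -1/3 ≤ t) (ht₂ : t ≤ 1/3) : h (-t) = -h t := by
  have := consistent_iff.1 (hh.consistent (v := -t) (w := 0) ht₁ (by linarith) (by norm_num)
    (by ring))
  have := hh.apply_zero
  omega

theorem apply_half {t : ℝ} (ht₁ : -1/3 ≤ t) (ht₂ : t ≤ 2/3) : h (t / 2) = h t := by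
  have := consistent_iff.1 (hh.consistent (v := -(t / 2)) (w := -(t / 2)) ht₁
    (by linarith) (by linarith) (by ring))
  have := hh.apply_neg (t := t / 2) (by linarith) (by linarith)
  omega

theorem apply_add {x y : ℝ} (hx : -1/3 ≤ x) (hy : -1/3 ≤ y) (hxy₁ : -1/3 ≤ x + y)
    (hxy₂ : x + y ≤ 1/3) (hx1 : h x = 1) (hy1 : h y = 1) : h (x + y) = 1 := by
  have := consistent_iff.1 (hh.consistent (w := -(x + y)) hx hy (by linarith) (by ring))
  have := hh.apply_neg hxy₁ hxy₂
  omega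

theorem apply_eq_one_or_apply_sub_eq_one {s u : ℝ} (hs : s ≤ 1/3) (hu₀ : 0 < u) (hus : u < s)
    (hs1 : h s = 1) : h u = 1 ∨ h (s - u) = 1 := by
  have := consistent_iff.1 (hh.consistent (u := s) (v := -u) (w := u - s)
    (by linarith) (by linarith) (by linarith) (by ring))
  have := hh.apply_neg (t := u) (by linarith) (by linarith)
  have := hh.apply_neg (t := s - u) (by linarith) (by linarith)
  rw [neg_sub] at this
  omega

theorem exists_mem_Ioo_apply_eq {s ε : ℝ} (hs₀ : 0 < s) (hs : s ≤ 2/3) (hε : 0 < ε) :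
    ∃ s' ∈ Ioo 0 ε, h s' = h s := by
  have hpow : ∀ k : ℕ, h (s * (1 / 2) ^ k) = h s := by
    intro k
    induction k with
    | zero => simp
    | succ k ih =>
      have : s * (1 / 2) ^ k ≤ s :=
        mul_le_of_le_one_right hs₀.le (pow_le_one₀ (by norm_num) (by norm_num))
      have : 0 ≤ s * (1 / 2) ^ k := by positivity
      rw [pow_succ, ← mul_assoc, ← div_eq_mul_one_div, hh.apply_half (by linarith) (by linarith),
        ih]
  obtain ⟨k, hk⟩ := exists_pow_lt_of_lt_one (div_pos hε hs₀) (by norm_num : (1 / 2 : ℝ) < 1)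
  exact ⟨s * (1 / 2) ^ k, ⟨by positivity, by rwa [lt_div_iff₀' hs₀] at hk⟩, hpow k⟩

theorem apply_eq_one_of_eventually {x : ℝ} (hx₀ : 0 < x) (hx : x ≤ 1/3)
    (hx1 : ∀ᶠ y in 𝓝 x, h y = 1) {t : ℝ} (ht : t ∈ Ioc 0 (1/3)) : h t = 1 := by
  obtain ⟨δ, hδ, hball⟩ := Metric.eventually_nhds_iff_ball.1 hx1
  have hmax : x - δ ≤ max (x - δ) (x / 2) ∧ x / 2 ≤ max (x - δ) (x / 2) :=
    ⟨le_max_left _ _, le_max_right _ _⟩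
  have hS : Ioc 0 (1/3) ⊆ {t ∈ Ioc (0 : ℝ) (1/3) | h t = 1} := by
    refine Ioc_subset_of_half_mem_of_add_mem (α := max (x - δ) (x / 2)) (β := x) ?_ ?_
      (lt_max_of_lt_right (half_pos hx₀))
      (max_lt (by linarith) (by linarith)) ?_
    · rintro y ⟨⟨hy₀, hy⟩, hy1⟩
      exact ⟨⟨by positivity, by linarith⟩, by rwa [hh.apply_half (by linarith) (by linarith)]⟩
    · rintro y ⟨⟨hy₀, -⟩, hy1⟩ z ⟨⟨hz₀, -⟩, hz1⟩ hyz
      exact ⟨⟨by positivity, hyz⟩,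
        hh.apply_add (by linarith) (by linarith) (by linarith) hyz hy1 hz1⟩
    · rintro y ⟨hy₁, hy₂⟩
      refine ⟨⟨by linarith, by linarith⟩, hball y ?_⟩
      rw [mem_ball, Real.dist_eq, abs_lt]
      constructor <;> linarith
  exact (hS ht).2

theorem volume_setOf_apply_eq_one_ne_zero {s : ℝ} (hs₀ : 0 < s) (hs : s ≤ 1/3) (hs1 : h s = 1) :
    volume {u ∈ Ioo 0 s | h u = 1} ≠ 0 := by
  refine volume_ne_zero_of_Ioo_subset_union_preimage_sub hs₀ fun u hu => ?_
  rcases hh.apply_eq_one_or_apply_sub_eq_one hs hu.1 hu.2 hs1 with hu1 | hu1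
  · exact Or.inl ⟨hu, hu1⟩
  · exact Or.inr ⟨⟨by linarith [hu.2], by linarith [hu.1]⟩, hu1⟩

theorem exists_apply_eq_neg_one_of_apply_eq_zero {s z : ℝ} (hs : s ∈ Ioc 0 (1/3))
    (hz : z ∈ Ioc 0 (1/3)) (hs1 : h s = 1) (hz0 : h z = 0) : ∃ y ∈ Ioc 0 (1/3), h y = -1 := by
  obtain ⟨s', ⟨hs'₀, hs'z⟩, hs'⟩ := hh.exists_mem_Ioo_apply_eq hs.1 (by linarith [hs.2]) hz.1
  have := consistent_iff.1 (hh.consistent (u := s') (v := -z) (w := z - s')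
    (by linarith) (by linarith [hz.2]) (by linarith [hz.2]) (by ring))
  have := hh.apply_neg (t := z) (by linarith [hz.1]) hz.2
  exact ⟨z - s', ⟨by linarith, by linarith [hz.2]⟩, by omega⟩

variable (hmeas : ∀ v : ℤ, MeasurableSet {t ∈ Icc (-1/3 : ℝ) (2/3) | h t = v})
include hmeas

theorem exists_eventually_apply_eq_one {s t : ℝ} (hs : s ∈ Ioc 0 (1/3)) (ht : t ∈ Ioc 0 (1/3))
    (hs1 : h s = 1) (ht1 : h t = -1) : ∃ x ∈ Ioo (-1/3 : ℝ) (1/3), ∀ᶠ y in 𝓝 x, h y = 1 := by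
  have hmeas' : ∀ {r : ℝ}, r ≤ 1/3 → ∀ v : ℤ, MeasurableSet {u ∈ Ioo 0 r | h u = v} := by
    intro r hr v
    convert measurableSet_Ioo.inter (hmeas v) using 1
    ext u
    constructor
    · rintro ⟨⟨hu₀, hur⟩, huv⟩
      exact ⟨⟨hu₀, hur⟩, ⟨by linarith, by linarith⟩, huv⟩
    · rintro ⟨hu, -, huv⟩
      exact ⟨hu, huv⟩
  have hC0 := hh.volume_setOf_apply_eq_one_ne_zero hs.1 hs.2 hs1
  have hD0 : volume {u ∈ Ioo 0 t | h u = -1} ≠ 0 := by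
    simpa only [neg_eq_iff_eq_neg] using
      hh.neg.volume_setOf_apply_eq_one_ne_zero ht.1 ht.2 (by simp [ht1])
  obtain ⟨x, hx⟩ := Real.exists_sub_mem_nhds (hmeas' hs.2 1) (hmeas' ht.2 (-1)) hC0 hD0
  have hsub : ∀ y ∈ {u ∈ Ioo 0 s | h u = 1} - {u ∈ Ioo 0 t | h u = -1},
      h y = 1 ∧ y ∈ Ioo (-1/3 : ℝ) (1/3) := by
    rintro y ⟨c, ⟨⟨hc₀, hcs⟩, hc1⟩, d, ⟨⟨hd₀, hdt⟩, hd1⟩, rfl⟩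
    have hd : h (-d) = 1 := by
      rw [hh.apply_neg (by linarith) (by linarith [ht.2]), hd1, neg_neg]
    refine ⟨?_, by linarith [ht.2], by linarith [hs.2]⟩
    exact hh.apply_add (by linarith) (by linarith [ht.2]) (by linarith [ht.2])
      (by linarith [hs.2]) hc1 hd
  exact ⟨x, (hsub x (mem_of_mem_nhds hx)).2, eventually_of_mem hx fun y hy => (hsub y hy).1⟩

theorem false_of_apply_eq_one_of_apply_eq_neg_one {s t : ℝ} (hs : s ∈ Ioc 0 (1/3))
    (ht : t ∈ Ioc 0 (1/3)) (hs1 : h s = 1) (ht1 : h t = -1) : False := by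
  obtain ⟨x, ⟨hx₁, hx₂⟩, hx⟩ := hh.exists_eventually_apply_eq_one hmeas hs ht hs1 ht1
  rcases lt_trichotomy x 0 with hneg | rfl | hpos
  · have hx' : ∀ᶠ y in 𝓝 (-x), -h y = 1 := by
      have := (tendsto_neg (-x)).eventually (by rwa [neg_neg])
      filter_upwards [this, Ioo_mem_nhds (neg_pos.2 hneg) (by linarith : -x < 1/3)]
        with y hy ⟨hy₀, hy₁⟩
      rw [hh.apply_neg (by linarith) hy₁.le] at hy
      omega
    have := hh.neg.apply_eq_one_of_eventually (neg_pos.2 hneg) (by linarith) hx' hs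
    simp [hs1] at this
  · have := hx.self_of_nhds
    rw [hh.apply_zero] at this
    omega
  · have := hh.apply_eq_one_of_eventually hpos hx₂.le hx ht
    simp [ht1] at this

theorem apply_eq_one_of_apply_eq_one {x y : ℝ} (hx : x ∈ Ioc 0 (1/3)) (hy : y ∈ Ioc 0 (1/3))
    (hx1 : h x = 1) : h y = 1 := by
  rcases hh.apply_mem (t := y) (by linarith [hy.1]) (by linarith [hy.2]) with hy1 | hy0 | hy1
  · exact hy1
  · obtain ⟨z, hz, hz1⟩ := hh.exists_apply_eq_neg_one_of_apply_eq_zero hx hy hx1 hy0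
    exact (hh.false_of_apply_eq_one_of_apply_eq_neg_one hmeas hx hz hx1 hz1).elim
  · exact (hh.false_of_apply_eq_one_of_apply_eq_neg_one hmeas hx hy hx1 hy1).elim

theorem apply_eq_apply {x y : ℝ} (hx : x ∈ Ioc 0 (1/3)) (hy : y ∈ Ioc 0 (1/3)) : h x = h y := by
  have hmeas_neg : ∀ v : ℤ, MeasurableSet {t ∈ Icc (-1/3 : ℝ) (2/3) | -h t = v} := fun v => by
    simpa only [neg_eq_iff_eq_neg] using hmeas (-v)
  have h₁ := hh.apply_eq_one_of_apply_eq_one hmeas hx hy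
  have h₁' := hh.apply_eq_one_of_apply_eq_one hmeas hy hx
  have h₂ : -h x = 1 → -h y = 1 := hh.neg.apply_eq_one_of_apply_eq_one hmeas_neg hx hy
  have h₂' : -h y = 1 → -h x = 1 := hh.neg.apply_eq_one_of_apply_eq_one hmeas_neg hy hx
  have := hh.apply_mem (t := x) (by linarith [hx.1]) (by linarith [hx.2])
  have := hh.apply_mem (t := y) (by linarith [hy.1]) (by linarith [hy.2])
  omega

theorem exists_eq_sign : ∃ κ : ℝ, ∀ t ∈ Icc (-1/3 : ℝ) (2/3), (h t : ℝ) = Real.sign (κ * t) := by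
  have hpos : ∀ t, 0 < t → t ≤ 2/3 → h t = h (1/3) := fun t ht₀ ht => by
    rw [← hh.apply_half (by linarith) ht]
    exact hh.apply_eq_apply hmeas ⟨by linarith, by linarith⟩ ⟨by norm_num, le_rfl⟩
  refine ⟨h (1/3), fun t ⟨ht₁, ht₂⟩ => ?_⟩
  have hc := hh.apply_mem (t := 1/3) (by norm_num) (by norm_num)
  rcases lt_trichotomy t 0 with ht | rfl | ht
  · have := hh.apply_neg (t := -t) (by linarith) (by linarith)
    rw [neg_neg, hpos (-t) (by linarith) (by linarith)] at this
    rw [this]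
    generalize h (1/3) = c at hc
    rcases hc with rfl | rfl | rfl <;> simp [Real.sign_of_neg, Real.sign_of_pos, ht]
  · simp [hh.apply_zero]
  · rw [hpos t ht ht₂]
    generalize h (1/3) = c at hc
    rcases hc with rfl | rfl | rfl <;> simp [Real.sign_of_neg, Real.sign_of_pos, ht]

end ZeroSumConsistent

theorem stmt17_general (g : ℝ → ℤ)
    (hmeas : ∀ v : ℤ, MeasurableSet {x ∈ Set.Icc (0:ℝ) 1 | g x = v})
    (hcons : ∀ x ∈ Set.Icc (0:ℝ) 1, ∀ y ∈ Set.Icc (0:ℝ) 1, ∀ z ∈ Set.Icc (0:ℝ) 1,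
      x + y + z = 1 → Consistent (g x) (g y) (g z)) :
    ∃ κ : ℝ, ∀ x ∈ Set.Icc (0:ℝ) 1, (g x : ℝ) = Real.sign (κ * (x - 1/3)) := by
  have hh : ZeroSumConsistent (fun t => g (t + 1/3)) := fun u hu v hv w hw huvw =>
    hcons _ ⟨by linarith [hu.1], by linarith [hu.2]⟩ _ ⟨by linarith [hv.1], by linarith [hv.2]⟩
      _ ⟨by linarith [hw.1], by linarith [hw.2]⟩ (by linarith)
  have hmeas' : ∀ v : ℤ, MeasurableSet {t ∈ Icc (-1/3 : ℝ) (2/3) | g (t + 1/3) = v} := by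
    intro v
    convert (hmeas v).preimage (measurable_add_const (1/3)) using 1
    ext t
    constructor <;> rintro ⟨⟨ht₁, ht₂⟩, hgt⟩ <;> exact ⟨⟨by linarith, by linarith⟩, hgt⟩
  obtain ⟨κ, hκ⟩ := hh.exists_eq_sign hmeas'
  refine ⟨κ, fun x hx => ?_⟩
  simpa using hκ (x - 1/3) ⟨by linarith [hx.1], by linarith [hx.2]⟩

theorem stmt17 (g : ℝ → ℤ)
    (hrange : ∀ x ∈ Set.Icc (0:ℝ) 1, g x = 1 ∨ g x = 0 ∨ g x = -1)
    (hmeas : ∀ v : ℤ, MeasurableSet {x ∈ Set.Icc (0:ℝ) 1 | g x = v})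
    (hcons : ∀ x ∈ Set.Icc (0:ℝ) 1, ∀ y ∈ Set.Icc (0:ℝ) 1, ∀ z ∈ Set.Icc (0:ℝ) 1,
      x + y + z = 1 → Consistent (g x) (g y) (g z)) :
    ∃ κ : ℝ, ∀ x ∈ Set.Icc (0:ℝ) 1, (g x : ℝ) = Real.sign (κ * (x - 1/3)) :=
  stmt17_general g hmeas hcons
end

section
/- Let M ⊆ ℝ \ {0} satisfy 0 ∉ M, M closed under addition, M closed under positive rational dilations, 1 ∈ M, −√2 ∈ M, and M ∪ (−M) = ℝ \ {0}. Define g : [0,1] → {1,0,−1} by g(1/3)=0, g(x)=−1 if x−1/3 ∈ M, g(x)=1 otherwise. Then g(0) = 1, g(1) = −1, and g(√2/4 + 1/3) = 1; in particular g is not of the form x ↦ sgn(κ(x − 1/3)) for any κ ∈ ℝ, since g(1) = −1 ≠ 0 forces κ < 0 while g(√2/4+1/3) = 1 forces κ ≥ 0. -/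
theorem stmt19 (M : Set ℝ)
    (h0 : (0 : ℝ) ∉ M)
    (hne : ∀ x ∈ M, x ≠ 0)
    (hadd : ∀ s ∈ M, ∀ t ∈ M, s + t ∈ M)
    (hq : ∀ t ∈ M, ∀ q : ℚ, 0 < q → (q : ℝ) * t ∈ M)
    (h1 : (1 : ℝ) ∈ M)
    (hsqrt : -Real.sqrt 2 ∈ M)
    (hcover : M ∪ (-M) = {x : ℝ | x ≠ 0})
    (g : ℝ → ℤ)
    (hg13 : g (1/3) = 0)
    (hgL : ∀ x : ℝ, x ≠ 1/3 → x - 1/3 ∈ M → g x = -1)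
    (hgW : ∀ x : ℝ, x ≠ 1/3 → x - 1/3 ∉ M → g x = 1) :
    g 0 = 1 ∧ g 1 = -1 ∧ g (Real.sqrt 2 / 4 + 1/3) = 1 ∧
    ¬ ∃ κ : ℝ, ∀ x ∈ Set.Icc (0:ℝ) 1, (g x : ℝ) = Real.sign (κ * (x - 1/3)) := by
  have s2pos : (0:ℝ) < Real.sqrt 2 := Real.sqrt_pos.mpr (by norm_num)
  have hg0 : g 0 = 1 := by
    apply hgW 0 (by norm_num)
    intro hmem
    have h3 : ((3:ℚ):ℝ) * (0 - 1/3) ∈ M := hq _ hmem 3 (by norm_num)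
    have : (-1 : ℝ) ∈ M := by
      have e : ((3:ℚ):ℝ) * (0 - 1/3) = (-1:ℝ) := by push_cast; ring
      rwa [e] at h3
    exact h0 (by simpa using hadd _ h1 _ this)
  have hg1 : g 1 = -1 := by
    apply hgL 1 (by norm_num)
    have := hq _ h1 (2/3) (by norm_num)
    norm_num at this ⊢
    exact this
  have hgs : g (Real.sqrt 2 / 4 + 1/3) = 1 := by
    apply hgW _ (by intro h; nlinarith)
    intro hmem
    have h4 : ((4:ℚ):ℝ) * (Real.sqrt 2 / 4 + 1/3 - 1/3) ∈ M :=
      hq _ hmem 4 (by norm_num)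
    have hs : Real.sqrt 2 ∈ M := by
      convert h4 using 1; push_cast; ring
    exact h0 (by simpa using hadd _ hs _ hsqrt)
  refine ⟨hg0, hg1, hgs, ?_⟩
  rintro ⟨κ, hκ⟩
  have e1 : ((-1 : ℤ) : ℝ) = Real.sign (κ * (1 - 1/3)) := hg1 ▸ hκ 1 (by norm_num)
  have s2le : Real.sqrt 2 ≤ 2 := by
    nlinarith [Real.sq_sqrt (by norm_num : (2:ℝ) ≥ 0)]
  have e2 : ((1 : ℤ) : ℝ) = Real.sign (κ * (Real.sqrt 2 / 4 + 1/3 - 1/3)) :=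
    hgs ▸ hκ _ ⟨by positivity, by nlinarith⟩
  have hκneg : κ < 0 := by
    by_contra h
    push_neg at h
    have : 0 ≤ κ * (1 - 1/3) := by nlinarith
    rcases this.lt_or_eq with hlt | heq
    · rw [Real.sign_of_pos hlt] at e1; norm_num at e1
    · rw [← heq, Real.sign_zero] at e1; norm_num at e1
  have : κ * (Real.sqrt 2 / 4 + 1/3 - 1/3) < 0 := by nlinarith
  rw [Real.sign_of_neg this] at e2; norm_num at e2
end
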